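/- arXiv:1203.0671 — 3 statements merged into one kernel-verified Lean document; each statement's English description precedes it below -/
import Mathlib

section
/- Let R be an irreducible root system with set of simple roots S, and let α ∈ S. Define a_α := 2⟨ρ_S - ρ_{S∖{α}}, α^∨⟩, where ρ_I denotes the half sum of positive roots of the root subsystem generated by I. Then a_α ≥ 2. -/
/-- Combinatorial data of a reduced irreducible crystallographic root system of rank `ℓ`.
Roots are recorded by their integer coordinates in the basis of simple roots
`β₁, …, β_ℓ` (so the simple root `βᵢ` is `Pi.single i 1`); `pair x i` is the
natural pairing `⟨x, βᵢ^∨⟩` of a root-lattice element with a simple coroot, and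
`coroot x` records the coordinates of the coroot `x^∨` in the basis of simple
coroots of the dual root system. -/
structure RootSystemData (ℓ : ℕ) where
  IsRoot : (Fin ℓ → ℤ) → Prop
  pair : (Fin ℓ → ℤ) → Fin ℓ → ℤ
  coroot : (Fin ℓ → ℤ) → (Fin ℓ → ℤ)
  finite_root : Set.Finite {x | IsRoot x}
  simple_mem : ∀ i, IsRoot (Pi.single i 1)
  pair_add : ∀ x y i, pair (x + y) i = pair x i + pair y i
  pair_single_self : ∀ i, pair (Pi.single i 1) i = 2
  pair_single_nonpos : ∀ i j, i ≠ j → pair (Pi.single i 1) j ≤ 0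
  root_ne_zero : ∀ x, IsRoot x → x ≠ 0
  root_sign : ∀ x, IsRoot x → (∀ i, 0 ≤ x i) ∨ (∀ i, x i ≤ 0)
  neg_mem : ∀ x, IsRoot x → IsRoot (-x)
  reflect_mem : ∀ x i, IsRoot x → IsRoot (x - pair x i • Pi.single i 1)
  reduced : ∀ x, IsRoot x → ¬ IsRoot (2 • x)
  coroot_single : ∀ i, coroot (Pi.single i 1) = Pi.single i 1
  coroot_neg : ∀ x, coroot (-x) = - coroot x
  irreducible : ∀ A : Finset (Fin ℓ),
      (∀ i ∈ A, ∀ j ∉ A, pair (Pi.single i 1) j = 0) → A = ∅ ∨ A = Finset.univ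

namespace RootSystemData

variable {ℓ : ℕ} (R : RootSystemData ℓ)

/-- `x` is a positive root: all coordinates in the simple-root basis are nonnegative. -/
def IsPosRoot (x : Fin ℓ → ℤ) : Prop := R.IsRoot x ∧ ∀ i, 0 ≤ x i

/-- The (finite) set of positive roots, as a `Finset`. -/
noncomputable def posRoots : Finset (Fin ℓ → ℤ) :=
  (R.finite_root.subset (fun _ hx => hx.1 : {x | R.IsPosRoot x} ⊆ {x | R.IsRoot x})).toFinset

/-- The positive roots of the root subsystem `R_I` generated by the simple roots in `I`,
i.e. the positive roots supported on `I`. -/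
noncomputable def posRootsIn (I : Finset (Fin ℓ)) : Finset (Fin ℓ → ℤ) :=
  R.posRoots.filter fun x => ∀ i ∉ I, x i = 0

/-- `2⟨ρ_I, β_j^∨⟩ = ∑_{γ ∈ R_I⁺} ⟨γ, β_j^∨⟩`, twice the pairing of the half sum of
positive roots of the subsystem generated by `I` with a simple coroot. -/
noncomputable def twoRhoPair (I : Finset (Fin ℓ)) (j : Fin ℓ) : ℤ :=
  ∑ x ∈ R.posRootsIn I, R.pair x j

/-- `a_α := 2⟨ρ_S - ρ_I, α^∨⟩`. -/
noncomputable def aCoeff (I : Finset (Fin ℓ)) (α : Fin ℓ) : ℤ :=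
  R.twoRhoPair Finset.univ α - R.twoRhoPair I α

/-- The height of a root-lattice element (sum of its simple-root coordinates). -/
def height (x : Fin ℓ → ℤ) : ℤ := ∑ i, x i

/-- The number of positive roots of the subsystem generated by `J` having height `h`. -/
noncomputable def heightCount (J : Finset (Fin ℓ)) (h : ℕ) : ℕ :=
  ((R.posRootsIn J).filter fun x => height x = h).card

/-- The `i`-th largest exponent of the subsystem generated by `J` (for `i = 1, …, |J|`),
defined via the partition dual to the partition of `|R_J⁺|` by the numbers of positive
roots of each height (Kostant). -/
noncomputable def exponentD (J : Finset (Fin ℓ)) (i : ℕ) : ℕ :=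
  ((Finset.Icc 1 (R.posRootsIn J).card).filter fun h => i ≤ R.heightCount J h).card

/-- The pairing `⟨x, θ^∨⟩` where the coroot `θ^∨` has coordinates `R.coroot θ`
in the simple coroots. -/
noncomputable def pairCoroot (θ : Fin ℓ → ℤ) (x : Fin ℓ → ℤ) : ℤ :=
  ∑ i, R.coroot θ i * R.pair x i

end RootSystemData


namespace RootSystemData
variable {ℓ : ℕ} (R : RootSystemData ℓ)

/-- `pair · j` as an additive homomorphism. -/
noncomputable def pairHom (j : Fin ℓ) : (Fin ℓ → ℤ) →+ ℤ :=
  AddMonoidHom.mk' (fun x => R.pair x j) (fun x y => R.pair_add x y j)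

lemma pair_decomp (x : Fin ℓ → ℤ) (j : Fin ℓ) :
    R.pair x j = ∑ i, x i * R.pair (Pi.single i 1) j := by
  have hx : x = ∑ i, x i • (Pi.single i 1 : Fin ℓ → ℤ) := by
    conv_lhs => rw [← Finset.univ_sum_single x]
    refine Finset.sum_congr rfl fun i _ => ?_
    rw [← Pi.single_smul, smul_eq_mul, mul_one]
  have h0 : R.pair x j = R.pairHom j x := rfl
  rw [h0]; conv_lhs => rw [hx]
  rw [map_sum]
  refine Finset.sum_congr rfl fun i _ => ?_
  rw [map_zsmul]; simp [pairHom, smul_eq_mul]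

lemma mem_posRoots {x : Fin ℓ → ℤ} : x ∈ R.posRoots ↔ R.IsPosRoot x := by
  simp [posRoots, Set.Finite.mem_toFinset]

lemma pair_reflect (x : Fin ℓ → ℤ) (i : Fin ℓ) :
    R.pair (x - R.pair x i • Pi.single i 1) i = - R.pair x i := by
  have h0 : ∀ y, R.pair y i = R.pairHom i y := fun _ => rfl
  rw [h0, map_sub, map_zsmul, ← h0, ← h0, h0 (Pi.single i 1), ← h0,
    R.pair_single_self i]
  simp only [smul_eq_mul]; ring

lemma single_mem_posRoots (i : Fin ℓ) : (Pi.single i 1 : Fin ℓ → ℤ) ∈ R.posRoots := by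
  rw [R.mem_posRoots]
  refine ⟨R.simple_mem i, fun j => ?_⟩
  rcases eq_or_ne i j with rfl | h
  · simp
  · simp [Pi.single_eq_of_ne (Ne.symm h)]

end RootSystemData

/-- Let `R` be an irreducible root system with set of simple roots `S`
and `α ∈ S`.  With `a_α := 2⟨ρ_S - ρ_{S∖{α}}, α^∨⟩`, one has `a_α ≥ 2`. -/
theorem aCoeff_ge_two {ℓ : ℕ} (R : RootSystemData ℓ) (α : Fin ℓ) :
    2 ≤ R.aCoeff (Finset.univ.erase α) α := by
  classical
  unfold RootSystemData.aCoeff RootSystemData.twoRhoPair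
  -- The subsystem sum is nonpositive
  have hsub : ∑ x ∈ R.posRootsIn (Finset.univ.erase α), R.pair x α ≤ 0 := by
    refine Finset.sum_nonpos fun x hx => ?_
    rw [RootSystemData.posRootsIn, Finset.mem_filter] at hx
    obtain ⟨hxP, hx0⟩ := hx
    have hxα : x α = 0 := hx0 α (by simp)
    rw [R.pair_decomp x α]
    refine Finset.sum_nonpos fun i _ => ?_
    rcases eq_or_ne i α with rfl | h
    · simp [hxα]
    · exact mul_nonpos_of_nonneg_of_nonpos ((R.mem_posRoots.mp hxP).2 i)
        (R.pair_single_nonpos i α h)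
  -- The full sum: posRootsIn univ = posRoots
  have huniv : R.posRootsIn Finset.univ = R.posRoots := by
    rw [RootSystemData.posRootsIn]
    exact Finset.filter_true_of_mem (fun x _ i hi => absurd (Finset.mem_univ i) hi)
  rw [huniv]
  -- Split posRoots by whether the root is supported only at α
  have hsplit := Finset.sum_filter_add_sum_filter_not R.posRoots
    (fun x => ∀ i, i ≠ α → x i = 0) (fun x => R.pair x α)
  -- Sum over roots not supported only at α vanishes (reflection involution)
  have hN : ∑ x ∈ R.posRoots.filter (fun x => ¬ ∀ i, i ≠ α → x i = 0),
      R.pair x α = 0 := by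
    set N := R.posRoots.filter (fun x => ¬ ∀ i, i ≠ α → x i = 0) with hNdef
    have memN : ∀ x, x ∈ N ↔ R.IsPosRoot x ∧ ∃ i, i ≠ α ∧ x i ≠ 0 := by
      intro x
      simp only [hNdef, Finset.mem_filter, R.mem_posRoots]
      constructor
      · rintro ⟨h1, h2⟩
        push_neg at h2
        exact ⟨h1, h2⟩
      · rintro ⟨h1, i, h2, h3⟩
        exact ⟨h1, by push_neg; exact ⟨i, h2, h3⟩⟩
    have gmem : ∀ x ∈ N, (x - R.pair x α • Pi.single α 1) ∈ N := by
      intro x hx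
      obtain ⟨⟨hroot, hnn⟩, i, hiα, hi0⟩ := (memN x).mp hx
      have hg : R.IsRoot (x - R.pair x α • Pi.single α 1) := R.reflect_mem x α hroot
      have hcoord : ∀ j, j ≠ α → ((x - R.pair x α • Pi.single α 1 : Fin ℓ → ℤ)) j = x j := by
        intro j hj
        simp [Pi.single_apply, hj]
      have hipos : 0 < ((x - R.pair x α • Pi.single α 1 : Fin ℓ → ℤ)) i := by
        rw [hcoord i hiα]
        exact lt_of_le_of_ne (hnn i) (Ne.symm hi0)
      have hsign := R.root_sign _ hg
      have hnn' : ∀ j, 0 ≤ ((x - R.pair x α • Pi.single α 1 : Fin ℓ → ℤ)) j := by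
        rcases hsign with h | h
        · exact h
        · exact absurd (h i) (not_le.mpr hipos)
      refine (memN _).mpr ⟨⟨hg, hnn'⟩, i, hiα, ne_of_gt hipos⟩
    have hflip : ∀ x, R.pair x α + R.pair (x - R.pair x α • Pi.single α 1) α = 0 := by
      intro x; rw [R.pair_reflect]; ring
    have hne : ∀ x, R.pair x α ≠ 0 → x - R.pair x α • Pi.single α 1 ≠ x := by
      intro x hf heq
      apply hf
      have := congrArg (fun f => f α) heq
      simp only [Pi.sub_apply, Pi.smul_apply, Pi.single_eq_same, smul_eq_mul,
        mul_one] at this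
      linarith
    have hinv : ∀ x : Fin ℓ → ℤ,
        (x - R.pair x α • Pi.single α 1) -
          R.pair (x - R.pair x α • Pi.single α 1) α • Pi.single α 1 = x := by
      intro x
      have h1 := R.pair_reflect x α
      ext j
      simp only [Pi.sub_apply, Pi.smul_apply, smul_eq_mul]
      rw [h1]
      ring
    exact Finset.sum_involution (fun x _ => x - R.pair x α • Pi.single α 1)
      (fun x _ => hflip x) (fun x _ hf => hne x hf) (fun x hx => gmem x hx)
      (fun x hx => hinv x)
  -- Sum over roots supported only at α is at least 2
  have hM : 2 ≤ ∑ x ∈ R.posRoots.filter (fun x => ∀ i, i ≠ α → x i = 0),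
      R.pair x α := by
    have hmem : (Pi.single α 1 : Fin ℓ → ℤ) ∈
        R.posRoots.filter (fun x => ∀ i, i ≠ α → x i = 0) := by
      rw [Finset.mem_filter]
      exact ⟨R.single_mem_posRoots α, fun i hi => Pi.single_eq_of_ne hi 1⟩
    have hnn : ∀ x ∈ R.posRoots.filter (fun x => ∀ i, i ≠ α → x i = 0),
        0 ≤ R.pair x α := by
      intro x hx
      rw [Finset.mem_filter] at hx
      obtain ⟨hxP, hx0⟩ := hx
      rw [R.pair_decomp x α]
      refine Finset.sum_nonneg fun i _ => ?_
      rcases eq_or_ne i α with rfl | h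
      · have := (R.mem_posRoots.mp hxP).2 i
        rw [R.pair_single_self]
        positivity
      · simp [hx0 i h]
    calc (2 : ℤ) = R.pair (Pi.single α 1) α := (R.pair_single_self α).symm
      _ ≤ _ := Finset.single_le_sum hnn hmem
  linarith [hsplit]
end

section
/- Let Σ be a complete simplicial fan in N_ℝ ≅ ℝ^r whose cones are generated by parts of ℤ-bases (unimodular/smooth fan), with primitive ray generators e_1,...,e_s and positive integers a_i assigned to each ray. Let ω : ℝ^r → ℝ be the Σ-piecewise linear function with ω(e_i) = -a_i. Then ∑_{n ∈ N} t^{-ω(n)} = ∑_{σ ∈ Σ} ∏_{e_i ∈ σ(1)} t^{a_i}/(1 - t^{a_i}) = ∑_{σ ∈ Σ} (-1)^{dim σ} ∏_{e_i ∈ σ(1)} 1/(1 - t^{-a_i}), where the first sum decomposes N into the disjoint union of the relative interiors of the cones of Σ. -/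
/-!
Unimodularity gives a bijection between `N` and the pairs `(σ, k)` of a cone `σ ∈ Σ` and a
vector `k` of positive integers indexed by `σ(1)`, via `n = ∑ kᵢ eᵢ`, and on this point
`-ω(n) = ∑ kᵢ aᵢ`. Hence the coefficient of `t^m` on the left counts the `(σ, k)` with
`∑ kᵢ aᵢ = m`, which is the coefficient of `t^m` in `∏_{i ∈ σ} (t^{aᵢ} + t^{2aᵢ} + ⋯)`,
summed over `σ`. The second identity is `y / (1 - y) = -1 / (1 - y⁻¹)` for `y = t^{aᵢ}`.
-/

open PowerSeries Finset

namespace PowerSeries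

variable {K : Type*} [Field K]

theorem inv_one_sub_X_pow {a : ℕ} (ha : 0 < a) :
    (1 - X ^ a : K⟦X⟧)⁻¹ = mk fun n => if a ∣ n then 1 else 0 := by
  rw [inv_eq_iff_mul_eq_one (by simp [ha.ne'])]
  ext n
  rw [mul_sub, mul_one, map_sub, coeff_mul_X_pow', coeff_mk, coeff_one]
  rcases lt_or_ge n a with hn | hn
  · have : a ∣ n ↔ n = 0 := ⟨(Nat.eq_zero_of_dvd_of_lt · hn), by rintro rfl; simp⟩
    simp [hn.not_ge, this]
  · simp [hn, Nat.dvd_sub_iff_left hn dvd_rfl, (ha.trans_le hn).ne']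

theorem coeff_X_pow_mul_inv_one_sub_X_pow {a : ℕ} (ha : 0 < a) (n : ℕ) :
    coeff n (X ^ a * (1 - X ^ a : K⟦X⟧)⁻¹) = if 0 < n ∧ a ∣ n then 1 else 0 := by
  rw [inv_one_sub_X_pow ha, coeff_X_pow_mul', coeff_mk]
  rcases lt_or_ge n a with hn | hn
  · simpa [hn.not_ge] using fun h => Nat.not_dvd_of_pos_of_lt h hn
  · simp [hn, Nat.dvd_sub_iff_left hn dvd_rfl, ha.trans_le hn]

end PowerSeries

section Cones

variable {ι : Type*}

/-- Coordinates `k` of the lattice points `∑ kᵢ eᵢ` in the relative interior of the cone with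
rays `σ` at which `-ω` takes the value `m`. -/
def relIntCoords (a : ι → ℕ) (σ : Finset ι) (m : ℕ) : Set (ι → ℕ) :=
  {k | (∀ i, i ∈ σ ↔ 0 < k i) ∧ ∑ i ∈ σ, k i * a i = m}

variable [DecidableEq ι] {a : ι → ℕ} {σ : Finset ι} {m : ℕ}

noncomputable def relIntCoordsEquiv (ha : ∀ i ∈ σ, 0 < a i) :
    relIntCoords a σ m ≃
      {l // l ∈ (σ.finsuppAntidiag m).filter fun l => ∀ i ∈ σ, 0 < l i ∧ a i ∣ l i} where
  toFun k := ⟨Finsupp.onFinset σ (fun i => k.1 i * a i) fun i hi =>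
      (k.2.1 i).mpr (Nat.pos_of_ne_zero (left_ne_zero_of_mul hi)), by
    obtain ⟨hk, hsum⟩ := k.2
    simp only [mem_filter, mem_finsuppAntidiag, Finsupp.onFinset_apply]
    exact ⟨⟨hsum, Finsupp.support_onFinset_subset⟩,
      fun i hi => ⟨Nat.mul_pos ((hk i).mp hi) (ha i hi), dvd_mul_left _ _⟩⟩⟩
  invFun l := ⟨fun i => l.1 i / a i, by
    obtain ⟨⟨hsum, hsupp⟩, hl⟩ := by simpa only [mem_filter, mem_finsuppAntidiag] using l.2
    refine ⟨fun i => ⟨fun hi => Nat.div_pos (Nat.le_of_dvd (hl i hi).1 (hl i hi).2) (ha i hi),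
      fun hpos => ?_⟩, ?_⟩
    · by_contra hi
      simp [Finsupp.notMem_support_iff.mp (mt (@hsupp i) hi)] at hpos
    · exact (sum_congr rfl fun i hi => Nat.div_mul_cancel (hl i hi).2).trans hsum⟩
  left_inv k := by
    ext i
    by_cases hi : i ∈ σ
    · simp [Nat.mul_div_cancel _ (ha i hi)]
    · simp [show k.1 i = 0 by simpa using mt (k.2.1 i).mpr hi]
  right_inv l := by
    obtain ⟨⟨-, hsupp⟩, hl⟩ := by simpa only [mem_filter, mem_finsuppAntidiag] using l.2
    ext i
    by_cases hi : i ∈ σ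
    · simp [Nat.div_mul_cancel (hl i hi).2]
    · simp [Finsupp.notMem_support_iff.mp (mt (@hsupp i) hi)]

theorem PowerSeries.coeff_prod_X_pow_mul_inv_one_sub_X_pow {K : Type*} [Field K]
    (ha : ∀ i ∈ σ, 0 < a i) (m : ℕ) :
    coeff m (∏ i ∈ σ, (X : PowerSeries K) ^ a i * (1 - X ^ a i)⁻¹) =
      (Nat.card (relIntCoords a σ m) : K) := by
  rw [coeff_prod, sum_congr rfl fun l _ => prod_congr rfl fun i hi =>
    coeff_X_pow_mul_inv_one_sub_X_pow (ha i hi) (l i)]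
  simp only [prod_boole, sum_boole]
  rw [Nat.card_congr (relIntCoordsEquiv ha), Nat.card_eq_finsetCard]

variable {M : Type*} [AddCommGroup M] {e : ι → M} {C : Finset (Finset ι)}

theorem card_level_eq_sum_card_relIntCoords (ha : ∀ i, 0 < a i)
    (hpart : ∀ n : M, ∃! p : Finset ι × (ι → ℕ),
        p.1 ∈ C ∧ (∀ i, i ∈ p.1 ↔ 0 < p.2 i) ∧ n = ∑ i ∈ p.1, (p.2 i : ℤ) • e i)
    {ω : M → ℤ} (hω : ∀ σ ∈ C, ∀ k : ι → ℕ,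
        ω (∑ i ∈ σ, (k i : ℤ) • e i) = -∑ i ∈ σ, (k i : ℤ) * a i) (m : ℕ) :
    Nat.card {n : M // ω n = -(m : ℤ)} = ∑ σ ∈ C, Nat.card (relIntCoords a σ m) := by
  have hlevel : ∀ σ ∈ C, ∀ k : ι → ℕ,
      ω (∑ i ∈ σ, (k i : ℤ) • e i) = -(m : ℤ) ↔ ∑ i ∈ σ, k i * a i = m := by
    intro σ hσ k
    rw [hω σ hσ k, neg_inj]
    exact_mod_cast Iff.rfl
  let f : (Σ σ : C, relIntCoords a σ m) → {n : M // ω n = -(m : ℤ)} := fun x =>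
    ⟨∑ i ∈ x.1.1, (x.2.1 i : ℤ) • e i, (hlevel _ x.1.2 _).mpr x.2.2.2⟩
  have hf : Function.Bijective f := by
    constructor
    · rintro ⟨⟨σ, hσ⟩, k, hk⟩ ⟨⟨τ, hτ⟩, l, hl⟩ h
      have := (hpart _).unique (y₁ := (σ, k)) (y₂ := (τ, l)) ⟨hσ, hk.1, rfl⟩
        ⟨hτ, hl.1, congrArg Subtype.val h⟩
      simp only [Prod.mk.injEq] at this
      obtain ⟨rfl, rfl⟩ := this
      rfl
    · rintro ⟨n, hn⟩
      obtain ⟨⟨σ, k⟩, ⟨hσ, hk, rfl⟩, -⟩ := hpart n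
      exact ⟨⟨⟨σ, hσ⟩, k, hk, (hlevel σ hσ k).mp hn⟩, rfl⟩
  have (σ : C) : Finite (relIntCoords a σ m) :=
    .of_equiv _ (relIntCoordsEquiv fun i _ => ha i).symm
  rw [← Nat.card_congr (Equiv.ofBijective f hf), Nat.card_sigma]
  exact C.sum_coe_sort fun σ => Nat.card (relIntCoords a σ m)

end Cones

theorem div_one_sub_eq_neg_inv_one_sub_inv {K : Type*} [Field K] {y : K} (hy : y ≠ 0) :
    y / (1 - y) = -(1 - y⁻¹)⁻¹ := by
  rcases eq_or_ne y 1 with rfl | hy1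
  · simp
  · have : 1 - y ≠ 0 := sub_ne_zero.mpr hy1.symm
    field_simp
    ring

theorem complete_fan_lattice_generating_series_general (r s : ℕ)
    (e : Fin s → (Fin r → ℤ)) (a : Fin s → ℕ) (ha : ∀ i, 0 < a i)
    (C : Finset (Finset (Fin s)))
    (hpart : ∀ n : Fin r → ℤ, ∃! p : Finset (Fin s) × (Fin s → ℕ),
        p.1 ∈ C ∧ (∀ i, i ∈ p.1 ↔ 0 < p.2 i) ∧ n = ∑ i ∈ p.1, (p.2 i : ℤ) • e i)
    (ω : (Fin r → ℤ) → ℤ)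
    (hω : ∀ σ ∈ C, ∀ k : Fin s → ℕ,
        ω (∑ i ∈ σ, (k i : ℤ) • e i) = -∑ i ∈ σ, (k i : ℤ) * a i) :
    (PowerSeries.mk (fun m => (Nat.card {n : Fin r → ℤ // ω n = -(m : ℤ)} : ℚ)) =
        ∑ σ ∈ C, ∏ i ∈ σ, ((X : PowerSeries ℚ) ^ (a i) * (1 - X ^ (a i))⁻¹)) ∧
    (∑ σ ∈ C, ∏ i ∈ σ, ((RatFunc.X : RatFunc ℚ) ^ (a i) / (1 - RatFunc.X ^ (a i)))
        = ∑ σ ∈ C, (-1 : RatFunc ℚ) ^ σ.card *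
            ∏ i ∈ σ, (1 - (RatFunc.X⁻¹ : RatFunc ℚ) ^ (a i))⁻¹) := by
  refine ⟨?_, sum_congr rfl fun σ _ => ?_⟩
  · ext m
    rw [coeff_mk, card_level_eq_sum_card_relIntCoords ha hpart hω m, map_sum]
    push_cast
    exact sum_congr rfl fun σ _ =>
      (coeff_prod_X_pow_mul_inv_one_sub_X_pow (fun i _ => ha i) m).symm
  · rw [prod_congr rfl fun i _ =>
      div_one_sub_eq_neg_inv_one_sub_inv (pow_ne_zero (a i) RatFunc.X_ne_zero), prod_neg]
    simp only [inv_pow]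

/-- Let `Σ` be a complete unimodular fan in `ℝ^r` with primitive ray
generators `e_1, …, e_s` and positive integers `a_i` attached to the rays; cones of `Σ`
are recorded by their sets of rays (`C`, closed under faces).  Completeness and
unimodularity are encoded by: every `n ∈ N = ℤ^r` lies in the relative interior of a
unique cone `σ ∈ Σ` and there has a unique expression `n = ∑_{i ∈ σ(1)} kᵢ eᵢ` with
`kᵢ > 0`.  Let `ω` be the `Σ`-piecewise linear function with `ω(eᵢ) = -aᵢ`.  Then
`∑_{n ∈ N} t^{-ω(n)} = ∑_{σ ∈ Σ} ∏_{eᵢ ∈ σ(1)} t^{aᵢ}/(1 - t^{aᵢ})`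
(as power series), and
`∑_{σ ∈ Σ} ∏ t^{aᵢ}/(1-t^{aᵢ}) = ∑_{σ ∈ Σ} (-1)^{dim σ} ∏ 1/(1 - t^{-aᵢ})`
(as rational functions). -/
theorem complete_fan_lattice_generating_series (r s : ℕ)
    (e : Fin s → (Fin r → ℤ)) (a : Fin s → ℕ) (ha : ∀ i, 0 < a i)
    (C : Finset (Finset (Fin s)))
    (hfaces : ∀ σ ∈ C, ∀ τ ⊆ σ, τ ∈ C)
    (hpart : ∀ n : Fin r → ℤ, ∃! p : Finset (Fin s) × (Fin s → ℕ),
        p.1 ∈ C ∧ (∀ i, i ∈ p.1 ↔ 0 < p.2 i) ∧ n = ∑ i ∈ p.1, (p.2 i : ℤ) • e i)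
    (ω : (Fin r → ℤ) → ℤ)
    (hω : ∀ σ ∈ C, ∀ k : Fin s → ℕ,
        ω (∑ i ∈ σ, (k i : ℤ) • e i) = -∑ i ∈ σ, (k i : ℤ) * a i) :
    (PowerSeries.mk (fun m => (Nat.card {n : Fin r → ℤ // ω n = -(m : ℤ)} : ℚ)) =
        ∑ σ ∈ C, ∏ i ∈ σ, ((X : PowerSeries ℚ) ^ (a i) * (1 - X ^ (a i))⁻¹)) ∧
    (∑ σ ∈ C, ∏ i ∈ σ, ((RatFunc.X : RatFunc ℚ) ^ (a i) / (1 - RatFunc.X ^ (a i)))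
        = ∑ σ ∈ C, (-1 : RatFunc ℚ) ^ σ.card *
            ∏ i ∈ σ, (1 - (RatFunc.X⁻¹ : RatFunc ℚ) ^ (a i))⁻¹) :=
  complete_fan_lattice_generating_series_general r s e a ha C hpart ω hω
end

section
/- The identity (𝕃-1)²(𝕃+1)(𝕃²+1)(𝕃²+𝕃+1) / ((1-𝕃^{-2})(1-𝕃^{-3})) = 𝕃⁵(𝕃²+1) holds in the field ℚ(𝕃). In particular, the stringy E-function of the affine cone over G(2,5) is the polynomial 𝕃⁵(𝕃²+1), and its value at 𝕃 = 1 is 2. -/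
/-- The identity
`(𝕃-1)²(𝕃+1)(𝕃²+1)(𝕃²+𝕃+1) / ((1-𝕃⁻²)(1-𝕃⁻³)) = 𝕃⁵(𝕃²+1)` holds in `ℚ(𝕃)`; in
particular the stringy `E`-function of the affine cone over `G(2,5)` is the polynomial
`𝕃⁵(𝕃²+1)`, whose value at `𝕃 = 1` is `2`. -/
theorem stringy_E_cone_G25 :
    (((RatFunc.X : RatFunc ℚ) - 1) ^ 2 * (RatFunc.X + 1) * (RatFunc.X ^ 2 + 1) *
          (RatFunc.X ^ 2 + RatFunc.X + 1) /
        ((1 - (RatFunc.X⁻¹ : RatFunc ℚ) ^ 2) * (1 - (RatFunc.X⁻¹ : RatFunc ℚ) ^ 3)) =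
      RatFunc.X ^ 5 * (RatFunc.X ^ 2 + 1)) ∧
    ((1 : ℚ) ^ 5 * ((1 : ℚ) ^ 2 + 1) = 2) := by
  constructor
  · have hX : (RatFunc.X : RatFunc ℚ) ≠ 0 := RatFunc.X_ne_zero
    have key : ∀ p : Polynomial ℚ, Polynomial.eval 2 p ≠ 0 →
        algebraMap (Polynomial ℚ) (RatFunc ℚ) p ≠ 0 := by
      intro p hp
      exact RatFunc.algebraMap_ne_zero (fun h => hp (by simp [h]))
    have h2 : ((RatFunc.X : RatFunc ℚ) ^ 2 - 1) ≠ 0 := by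
      have := key (Polynomial.X ^ 2 - 1) (by norm_num)
      simpa [map_sub, map_pow, RatFunc.algebraMap_X] using this
    have h3 : ((RatFunc.X : RatFunc ℚ) ^ 3 - 1) ≠ 0 := by
      have := key (Polynomial.X ^ 3 - 1) (by norm_num)
      simpa [map_sub, map_pow, RatFunc.algebraMap_X] using this
    have e2 : 1 - (RatFunc.X⁻¹ : RatFunc ℚ) ^ 2 =
        ((RatFunc.X : RatFunc ℚ) ^ 2 - 1) / RatFunc.X ^ 2 := by
      field_simp
    have e3 : 1 - (RatFunc.X⁻¹ : RatFunc ℚ) ^ 3 =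
        ((RatFunc.X : RatFunc ℚ) ^ 3 - 1) / RatFunc.X ^ 3 := by
      field_simp
    rw [e2, e3]
    field_simp
    ring
  · norm_num
end
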